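/- arXiv:1302.3041 — 3 statements merged into one kernel-verified Lean document; each statement's English description precedes it below -/
import Mathlib

section
/- The Markov kernels K_a(x,dy) = e^{-(1-a)/(ax)} δ_{ax}(dy) + (1-a) y^{-2} e^{-(1-a)/y} 1_{{y > ax}} dy and Ǩ_a(y,dx) = a δ_{y/a}(dx) + (1-a) x^{-2} e^{-1/x + a/y} 1_{{x < y/a}} dx satisfy the equilibrium (detailed balance up to time reversal) relation π(dx) K_a(x,dy) = π(dy) Ǩ_a(y,dx), where π(dx) = x^{-2} e^{-1/x} 1_{{x > 0}} dx is the standard 1-Fréchet law. -/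
open MeasureTheory Real

/-- The standard 1-Fréchet law `π(dx) = x⁻² e^{-1/x} 1_{x>0} dx`. -/
noncomputable def frechetLaw : Measure ℝ :=
  volume.withDensity fun x => ENNReal.ofReal (if 0 < x then exp (-(1 / x)) / x ^ 2 else 0)

/-- The forward max-AR(1) kernel
`K_a(x,dy) = e^{-(1-a)/(ax)} δ_{ax}(dy) + (1-a) y⁻² e^{-(1-a)/y} 1_{y>ax} dy`. -/
noncomputable def forwardKernel (a : ℝ) (x : ℝ) : Measure ℝ :=
  ENNReal.ofReal (exp (-((1 - a) / (a * x)))) • Measure.dirac (a * x) +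
    volume.withDensity fun y =>
      ENNReal.ofReal (if a * x < y then (1 - a) / y ^ 2 * exp (-((1 - a) / y)) else 0)

/-- The backward (time-reversed) kernel
`Ǩ_a(y,dx) = a δ_{y/a}(dx) + (1-a) x⁻² e^{-1/x + a/y} 1_{0<x<y/a} dx`. -/
noncomputable def backwardKernel (a : ℝ) (y : ℝ) : Measure ℝ :=
  ENNReal.ofReal a • Measure.dirac (y / a) +
    volume.withDensity fun x =>
      ENNReal.ofReal (if 0 < x ∧ x < y / a then (1 - a) / x ^ 2 * exp (-(1 / x) + a / y) else 0)

/-!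
Both kernels are a point mass plus an absolutely continuous part, and the two sides of the
relation match part by part. The atoms pair the transition `x ↦ a x` with `y ↦ y / a`: since
`1/x + (1-a)/(a x) = 1/(a x)`, the Fréchet density satisfies `π(x) e^{-(1-a)/(a x)} = a² π(a x)`,
and the substitution `y = a x` turns this into the weight `a π(y)` of the backward atom.
The densities satisfy the pointwise balance `π(x) k(x,y) = π(y) ǩ(y,x)` on `(0,∞)²`,
so these parts agree by Tonelli.
-/

noncomputable section

def frechetDensity (x : ℝ) : ENNReal :=
  ENNReal.ofReal (if 0 < x then exp (-(1 / x)) / x ^ 2 else 0)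

def forwardDensity (a x y : ℝ) : ENNReal :=
  ENNReal.ofReal (if a * x < y then (1 - a) / y ^ 2 * exp (-((1 - a) / y)) else 0)

def backwardDensity (a y x : ℝ) : ENNReal :=
  ENNReal.ofReal (if 0 < x ∧ x < y / a then (1 - a) / x ^ 2 * exp (-(1 / x) + a / y) else 0)

end

theorem frechetLaw_eq_withDensity : frechetLaw = volume.withDensity frechetDensity := rfl

@[fun_prop]
theorem measurable_frechetDensity : Measurable frechetDensity := by
  refine ENNReal.measurable_ofReal.comp (Measurable.ite measurableSet_Ioi ?_ measurable_const)
  fun_prop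

theorem measurable_forwardDensity (a : ℝ) :
    Measurable fun p : ℝ × ℝ => forwardDensity a p.1 p.2 := by
  refine ENNReal.measurable_ofReal.comp (Measurable.ite ?_ (by fun_prop) measurable_const)
  exact measurableSet_lt (by fun_prop) measurable_snd

theorem forwardKernel_apply (a x : ℝ) {B : Set ℝ} (hB : MeasurableSet B) :
    forwardKernel a x B
      = ENNReal.ofReal (exp (-((1 - a) / (a * x)))) * B.indicator 1 (a * x)
        + ∫⁻ y in B, forwardDensity a x y := by
  rw [forwardKernel, Measure.add_apply, Measure.smul_apply, smul_eq_mul,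
    Measure.dirac_apply' _ hB, withDensity_apply _ hB]
  rfl

theorem backwardKernel_apply (a y : ℝ) {A : Set ℝ} (hA : MeasurableSet A) :
    backwardKernel a y A
      = ENNReal.ofReal a * A.indicator 1 (y / a) + ∫⁻ x in A, backwardDensity a y x := by
  rw [backwardKernel, Measure.add_apply, Measure.smul_apply, smul_eq_mul,
    Measure.dirac_apply' _ hA, withDensity_apply _ hA]
  rfl

theorem lintegral_comp_const_mul {c : ℝ} (hc : c ≠ 0) (f : ℝ → ENNReal) :
    ∫⁻ x, f (c * x) = ENNReal.ofReal |c⁻¹| * ∫⁻ y, f y := by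
  rw [← (measurableEmbedding_mulLeft₀ hc).lintegral_map, Real.map_volume_mul_left hc,
    lintegral_smul_measure, smul_eq_mul]

section

variable {a : ℝ}

theorem frechetDensity_mul_exp (ha : 0 < a) {x : ℝ} (hx : 0 < x) :
    frechetDensity x * ENNReal.ofReal (exp (-((1 - a) / (a * x))))
      = ENNReal.ofReal a * (frechetDensity (a * x) * ENNReal.ofReal a) := by
  rw [frechetDensity, frechetDensity, if_pos hx, if_pos (by positivity),
    ← ENNReal.ofReal_mul (by positivity), ← ENNReal.ofReal_mul (by positivity),
    ← ENNReal.ofReal_mul ha.le]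
  congr 1
  have hexp : -(1 / x) + -((1 - a) / (a * x)) = -(1 / (a * x)) := by field_simp; ring
  rw [div_mul_eq_mul_div, ← exp_add, hexp]
  field_simp

theorem frechetDensity_mul_forwardDensity (ha : 0 < a) {x y : ℝ} (hx : 0 < x) (hy : 0 < y) :
    frechetDensity x * forwardDensity a x y = frechetDensity y * backwardDensity a y x := by
  have hmem : a * x < y ↔ 0 < x ∧ x < y / a := by
    rw [lt_div_iff₀ ha, mul_comm x]; exact ⟨fun h => ⟨hx, h⟩, And.right⟩
  rw [frechetDensity, frechetDensity, forwardDensity, backwardDensity, if_pos hx, if_pos hy]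
  by_cases hxy : a * x < y
  · rw [if_pos hxy, if_pos (hmem.mp hxy), ← ENNReal.ofReal_mul (by positivity),
      ← ENNReal.ofReal_mul (by positivity)]
    congr 1
    have hexp : exp (-(1 / x)) * exp (-((1 - a) / y))
        = exp (-(1 / y)) * exp (-(1 / x) + a / y) := by
      rw [← exp_add, ← exp_add]; congr 1; ring
    linear_combination ((1 - a) / (x ^ 2 * y ^ 2)) * hexp
  · rw [if_neg hxy, if_neg (hxy ∘ hmem.mpr)]
    simp

theorem atomic_parts_balance (ha : 0 < a) {A B : Set ℝ} (hA : MeasurableSet A)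
    (hB : MeasurableSet B) (hApos : A ⊆ Set.Ioi 0) :
    ∫⁻ x in A, frechetDensity x *
        (ENNReal.ofReal (exp (-((1 - a) / (a * x)))) * B.indicator 1 (a * x))
      = ∫⁻ y in B, frechetDensity y * (ENNReal.ofReal a * A.indicator 1 (y / a)) := by
  set G : ℝ → ENNReal :=
    B.indicator fun y => frechetDensity y * (ENNReal.ofReal a * A.indicator 1 (y / a))
  have hG : ∀ x, A.indicator (fun x => frechetDensity x *
      (ENNReal.ofReal (exp (-((1 - a) / (a * x)))) * B.indicator 1 (a * x))) x
        = ENNReal.ofReal a * G (a * x) := by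
    intro x
    have hax : a * x / a = x := by field_simp
    by_cases hx : x ∈ A
    · by_cases hxB : a * x ∈ B
      · simp only [G, Set.indicator_of_mem hx, Set.indicator_of_mem hxB, hax, Pi.one_apply,
          mul_one, ← mul_assoc, frechetDensity_mul_exp ha (hApos hx)]
      · simp [G, hx, hxB]
    · simp [G, hx, hax]
  rw [← lintegral_indicator hA, ← lintegral_indicator hB]
  simp only [hG]
  rw [lintegral_const_mul' _ _ ENNReal.ofReal_ne_top, lintegral_comp_const_mul ha.ne',
    ← mul_assoc, ← ENNReal.ofReal_mul ha.le, abs_of_pos (inv_pos.mpr ha),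
    mul_inv_cancel₀ ha.ne', ENNReal.ofReal_one, one_mul]

theorem density_parts_balance (ha : 0 < a) {A B : Set ℝ} (hA : MeasurableSet A)
    (hB : MeasurableSet B) (hApos : A ⊆ Set.Ioi 0) (hBpos : B ⊆ Set.Ioi 0) :
    ∫⁻ x in A, frechetDensity x * ∫⁻ y in B, forwardDensity a x y
      = ∫⁻ y in B, frechetDensity y * ∫⁻ x in A, backwardDensity a y x := by
  have hne_top : ∀ x, frechetDensity x ≠ ⊤ := fun _ => ENNReal.ofReal_ne_top
  calc ∫⁻ x in A, frechetDensity x * ∫⁻ y in B, forwardDensity a x y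
      = ∫⁻ x in A, ∫⁻ y in B, frechetDensity x * forwardDensity a x y := by
        simp only [lintegral_const_mul' _ _ (hne_top _)]
    _ = ∫⁻ y in B, ∫⁻ x in A, frechetDensity x * forwardDensity a x y :=
        lintegral_lintegral_swap ((measurable_frechetDensity.comp measurable_fst).mul
          (measurable_forwardDensity a)).aemeasurable
    _ = ∫⁻ y in B, ∫⁻ x in A, frechetDensity y * backwardDensity a y x :=
        setLIntegral_congr_fun hB fun y hy => setLIntegral_congr_fun hA fun x hx =>
          frechetDensity_mul_forwardDensity ha (hApos hx) (hBpos hy)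
    _ = ∫⁻ y in B, frechetDensity y * ∫⁻ x in A, backwardDensity a y x := by
        simp only [lintegral_const_mul' _ _ (hne_top _)]

end

theorem stmt6_general (a : ℝ) (ha : 0 < a) :
    ∀ A B : Set ℝ, MeasurableSet A → MeasurableSet B →
      A ⊆ Set.Ioi 0 → B ⊆ Set.Ioi 0 →
      ∫⁻ x in A, forwardKernel a x B ∂frechetLaw
        = ∫⁻ y in B, backwardKernel a y A ∂frechetLaw := by
  intro A B hA hB hApos hBpos
  have hfinite : ∀ (μ : Measure ℝ), ∀ᵐ x ∂μ, frechetDensity x < ⊤ :=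
    fun _ => ae_of_all _ fun _ => ENNReal.ofReal_lt_top
  rw [frechetLaw_eq_withDensity,
    setLIntegral_withDensity_eq_setLIntegral_mul_non_measurable _ measurable_frechetDensity _ hA
      (hfinite _),
    setLIntegral_withDensity_eq_setLIntegral_mul_non_measurable _ measurable_frechetDensity _ hB
      (hfinite _)]
  simp only [Pi.mul_apply, forwardKernel_apply _ _ hB, backwardKernel_apply _ _ hA, mul_add]
  rw [lintegral_add_left (by fun_prop (disch := assumption)),
    lintegral_add_left (by fun_prop (disch := assumption)),
    atomic_parts_balance ha hA hB hApos, density_parts_balance ha hA hB hApos hBpos]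

/-- Equilibrium (detailed balance up to time reversal) relation
`π(dx) K_a(x,dy) = π(dy) Ǩ_a(y,dx)` as measures on `(0,∞)²`: for all measurable
rectangles `A × B` in `(0,∞)²`, `∫_A K_a(x,B) π(dx) = ∫_B Ǩ_a(y,A) π(dy)`. -/
theorem stmt6 (a : ℝ) (ha : 0 < a) (ha1 : a < 1) :
    ∀ A B : Set ℝ, MeasurableSet A → MeasurableSet B →
      A ⊆ Set.Ioi 0 → B ⊆ Set.Ioi 0 →
      ∫⁻ x in A, forwardKernel a x B ∂frechetLaw
        = ∫⁻ y in B, backwardKernel a y A ∂frechetLaw :=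
  stmt6_general a ha
end

section
/- For a ∈ (0,1), the max-AR(1) process is not reversible: the law of the pair (X_a(0), X_a(1)) differs from the law of (X_a(1), X_a(0)). Concretely, P[X_a(1) = a X_a(0)] = E[e^{-(1-a)/(aX)}] > 0 while P[X_a(0) = a X_a(1)] = 0, where X is standard 1-Fréchet. -/
/-!
On the event `(1 - a) F ≤ a X` the maximum is attained by `a X`, so conditioning on `X` and using
the Fréchet law of `F` gives `P[X₁ = a X₀] = E[exp(-(1 - a)/(a X₀))]`, which is positive because
the integrand is. In the reversed direction, `X₀ = a X₁` forces either `X₀ = a² X₀`, i.e. `X₀ = 0`,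
or `X₀ = a (1 - a) F`; both are null events, the second because `F` has a continuous distribution
and is independent of `X₀`. The diagonal-type set `{(x, y) | y = a x}` therefore separates the laws
of `(X₀, X₁)` and `(X₁, X₀)`.
-/

open MeasureTheory Real ProbabilityTheory Filter Topology

theorem nonpos_or_eq_of_eq_mul_max {a x f : ℝ} (ha : 0 < a) (ha1 : a < 1)
    (h : x = a * max (a * x) ((1 - a) * f)) : x ≤ 0 ∨ x = a * (1 - a) * f := by
  rcases max_choice (a * x) ((1 - a) * f) with hm | hm <;> rw [hm] at h
  · have haa : a * a < 1 := by nlinarith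
    left; nlinarith
  · right; rw [h, mul_assoc]

section

variable {Ω : Type*} [MeasurableSpace Ω] {μ : Measure Ω}

theorem measure_eq_zero_of_tendsto_measure_le [IsFiniteMeasure μ] {Z : Ω → ℝ}
    (hZ : Measurable Z) {t : ℝ}
    (h : Tendsto (fun s => μ {ω | Z ω ≤ s}) (𝓝[<] t) (𝓝 (μ {ω | Z ω ≤ t}))) :
    μ {ω | Z ω = t} = 0 := by
  have hdiff : ∀ s < t, μ {ω | Z ω = t} ≤ μ {ω | Z ω ≤ t} - μ {ω | Z ω ≤ s} := fun s hs =>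
    calc μ {ω | Z ω = t} ≤ μ ({ω | Z ω ≤ t} \ {ω | Z ω ≤ s}) :=
          measure_mono fun ω (h : Z ω = t) => ⟨h.le, fun h' : Z ω ≤ s => by linarith⟩
      _ = μ {ω | Z ω ≤ t} - μ {ω | Z ω ≤ s} :=
          measure_sdiff (fun ω (h : Z ω ≤ s) => h.trans hs.le)
            (measurableSet_le hZ measurable_const).nullMeasurableSet (measure_ne_top μ _)
  have hlim : Tendsto (fun s => μ {ω | Z ω ≤ t} - μ {ω | Z ω ≤ s}) (𝓝[<] t) (𝓝 0) := by
    simpa only [Function.comp_def, tsub_self] using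
      ((ENNReal.continuous_sub_left (measure_ne_top μ {ω | Z ω ≤ t})).tendsto _).comp h
  exact le_antisymm (ge_of_tendsto hlim (eventually_nhdsWithin_of_forall hdiff)) zero_le

theorem measure_eq_eq_zero_of_frechet [IsFiniteMeasure μ] {Z : Ω → ℝ} (hZ : Measurable Z)
    (hpos : ∀ y : ℝ, 0 < y → μ {ω | Z ω ≤ y} = ENNReal.ofReal (exp (-(1 / y))))
    (hnonpos : ∀ y : ℝ, y ≤ 0 → μ {ω | Z ω ≤ y} = 0) (t : ℝ) :
    μ {ω | Z ω = t} = 0 := by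
  rcases le_or_gt t 0 with ht | ht
  · exact measure_mono_null (fun ω (h : Z ω = t) => h.le) (hnonpos t ht)
  · refine measure_eq_zero_of_tendsto_measure_le hZ ?_
    have hcont : ContinuousAt (fun s : ℝ => ENNReal.ofReal (exp (-(1 / s)))) t :=
      ENNReal.continuous_ofReal.continuousAt.comp (by fun_prop (disch := exact ht.ne'))
    rw [hpos t ht]
    refine (hcont.tendsto.mono_left nhdsWithin_le_nhds).congr' ?_
    filter_upwards [nhdsWithin_le_nhds (lt_mem_nhds ht)] with s hs using (hpos s hs).symm

theorem map_prodMk_ne_map_swap_of_measure_ne {α : Type*} [MeasurableSpace α] {X Y : Ω → α}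
    (hX : Measurable X) (hY : Measurable Y) {s : Set (α × α)} (hs : MeasurableSet s)
    (h : μ {ω | (X ω, Y ω) ∈ s} ≠ μ {ω | (Y ω, X ω) ∈ s}) :
    μ.map (fun ω => (X ω, Y ω)) ≠ μ.map (fun ω => (Y ω, X ω)) := by
  intro hmap
  apply h
  calc μ {ω | (X ω, Y ω) ∈ s} = μ.map (fun ω => (X ω, Y ω)) s :=
        (Measure.map_apply (hX.prodMk hY) hs).symm
    _ = μ {ω | (Y ω, X ω) ∈ s} := by rw [hmap, Measure.map_apply (hY.prodMk hX) hs]; rfl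

namespace ProbabilityTheory.IndepFun

variable {β γ : Type*} [MeasurableSpace β] [MeasurableSpace γ] [IsFiniteMeasure μ]

theorem measure_preimage_eq_lintegral {X : Ω → β} {F : Ω → γ} (hXF : IndepFun X F μ)
    (hX : Measurable X) (hF : Measurable F) {s : Set (β × γ)} (hs : MeasurableSet s) :
    μ {ω | (X ω, F ω) ∈ s} = ∫⁻ ω, μ {ω' | (X ω, F ω') ∈ s} ∂μ :=
  calc μ {ω | (X ω, F ω) ∈ s} = μ.map (fun ω => (X ω, F ω)) s :=
        (Measure.map_apply (hX.prodMk hF) hs).symm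
    _ = (μ.map X).prod (μ.map F) s := by
        rw [(indepFun_iff_map_prod_eq_prod_map_map hX.aemeasurable hF.aemeasurable).1 hXF]
    _ = ∫⁻ x, μ.map F (Prod.mk x ⁻¹' s) ∂μ.map X := Measure.prod_apply hs
    _ = ∫⁻ ω, μ {ω' | (X ω, F ω') ∈ s} ∂μ := by
        rw [lintegral_map (measurable_measure_prodMk_left hs) hX]
        exact lintegral_congr fun ω => Measure.map_apply hF (measurable_prodMk_left hs)

theorem measure_mul_le_mul_eq_lintegral_of_frechet {X F : Ω → ℝ} (hXF : IndepFun X F μ)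
    (hX : Measurable X) (hF : Measurable F) (hXpos : ∀ᵐ ω ∂μ, 0 < X ω)
    (hFcdf : ∀ y : ℝ, 0 < y → μ {ω | F ω ≤ y} = ENNReal.ofReal (exp (-(1 / y))))
    {b c : ℝ} (hb : 0 < b) (hc : 0 < c) :
    μ {ω | c * F ω ≤ b * X ω} = ∫⁻ ω, ENNReal.ofReal (exp (-(c / (b * X ω)))) ∂μ := by
  refine (hXF.measure_preimage_eq_lintegral hX hF (s := {p | c * p.2 ≤ b * p.1})
    (measurableSet_le (by fun_prop) (by fun_prop))).trans
    (lintegral_congr_ae (hXpos.mono fun ω hω => ?_))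
  have hset : {ω' | c * F ω' ≤ b * X ω} = {ω' | F ω' ≤ b * X ω / c} := by
    ext ω'
    simp only [Set.mem_ofPred_eq, le_div_iff₀ hc, mul_comm c]
  change μ {ω' | c * F ω' ≤ b * X ω} = _
  rw [hset, hFcdf _ (by positivity), one_div_div]

theorem measure_eq_mul_eq_zero {X F : Ω → ℝ} (hXF : IndepFun X F μ) (hX : Measurable X)
    (hF : Measurable F) (hFatom : ∀ t, μ {ω | F ω = t} = 0) {c : ℝ} (hc : c ≠ 0) :
    μ {ω | X ω = c * F ω} = 0 := by
  refine (hXF.measure_preimage_eq_lintegral hX hF (s := {p | p.1 = c * p.2})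
    (measurableSet_eq_fun (by fun_prop) (by fun_prop))).trans ?_
  refine (lintegral_congr fun ω => ?_).trans lintegral_zero
  change μ {ω' | X ω = c * F ω'} = 0
  have hset : {ω' | X ω = c * F ω'} = {ω' | F ω' = X ω / c} := by
    ext ω'
    simp only [Set.mem_ofPred_eq, eq_div_iff hc, mul_comm c, eq_comm]
  rw [hset, hFatom]

end ProbabilityTheory.IndepFun

end

theorem stmt10_general {Ω : Type*} [MeasurableSpace Ω] (μ : Measure Ω) [IsProbabilityMeasure μ]
    (a : ℝ) (ha : 0 < a) (ha1 : a < 1)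
    (X F : Ω → ℝ) (hmX : Measurable X) (hmF : Measurable F)
    (hindep : IndepFun X F μ)
    (hX0 : ∀ y : ℝ, y ≤ 0 → μ {ω | X ω ≤ y} = 0)
    (hF : ∀ y : ℝ, 0 < y → μ {ω | F ω ≤ y} = ENNReal.ofReal (exp (-(1 / y))))
    (hF0 : ∀ y : ℝ, y ≤ 0 → μ {ω | F ω ≤ y} = 0)
    (Y : Ω → ℝ) (hY : ∀ ω, Y ω = max (a * X ω) ((1 - a) * F ω)) :
    μ {ω | Y ω = a * X ω}
        = ∫⁻ ω, ENNReal.ofReal (exp (-((1 - a) / (a * X ω)))) ∂μ ∧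
    0 < μ {ω | Y ω = a * X ω} ∧
    μ {ω | X ω = a * Y ω} = 0 ∧
    Measure.map (fun ω => (X ω, Y ω)) μ ≠ Measure.map (fun ω => (Y ω, X ω)) μ := by
  have h1a : 0 < 1 - a := sub_pos.2 ha1
  have hXnonpos : μ {ω | X ω ≤ 0} = 0 := hX0 0 le_rfl
  have hXpos : ∀ᵐ ω ∂μ, 0 < X ω := by simpa only [ae_iff, not_lt] using hXnonpos
  have hmY : Measurable Y := by rw [funext hY]; fun_prop
  have hlaw : μ {ω | Y ω = a * X ω} = ∫⁻ ω, ENNReal.ofReal (exp (-((1 - a) / (a * X ω)))) ∂μ := by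
    have hset : {ω | Y ω = a * X ω} = {ω | (1 - a) * F ω ≤ a * X ω} := by
      ext ω; simp only [Set.mem_ofPred_eq, hY, max_eq_left_iff]
    rw [hset, hindep.measure_mul_le_mul_eq_lintegral_of_frechet hmX hmF hXpos hF ha h1a]
  have hpos : 0 < μ {ω | Y ω = a * X ω} := by
    rw [hlaw, lintegral_pos_iff_support (by fun_prop)]
    simp [Function.support, exp_pos]
  have hnull : μ {ω | X ω = a * Y ω} = 0 :=
    measure_mono_null (fun ω (hω : X ω = a * Y ω) => nonpos_or_eq_of_eq_mul_max ha ha1 (hY ω ▸ hω))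
      (measure_union_null hXnonpos (hindep.measure_eq_mul_eq_zero hmX hmF
        (measure_eq_eq_zero_of_frechet hmF hF hF0) (mul_pos ha h1a).ne'))
  refine ⟨hlaw, hpos, hnull, map_prodMk_ne_map_swap_of_measure_ne hmX hmY
    (s := {p | p.2 = a * p.1}) (measurableSet_eq_fun (by fun_prop) (by fun_prop)) ?_⟩
  exact hpos.ne'.trans_eq hnull.symm

/-- Non-reversibility of the max-AR(1) process for `a ∈ (0,1)`: with `X = X_a(0)` standard
1-Fréchet, `F` standard 1-Fréchet independent of `X`, and `Y = X_a(1) = max(aX, (1-a)F)`,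
one has `P[Y = aX] = E[e^{-(1-a)/(aX)}] > 0` while `P[X = aY] = 0`, and the law of
`(X, Y)` differs from the law of `(Y, X)`. -/
theorem stmt10 {Ω : Type*} [MeasurableSpace Ω] (μ : Measure Ω) [IsProbabilityMeasure μ]
    (a : ℝ) (ha : 0 < a) (ha1 : a < 1)
    (X F : Ω → ℝ) (hmX : Measurable X) (hmF : Measurable F)
    (hindep : IndepFun X F μ)
    (hX : ∀ y : ℝ, 0 < y → μ {ω | X ω ≤ y} = ENNReal.ofReal (exp (-(1 / y))))
    (hX0 : ∀ y : ℝ, y ≤ 0 → μ {ω | X ω ≤ y} = 0)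
    (hF : ∀ y : ℝ, 0 < y → μ {ω | F ω ≤ y} = ENNReal.ofReal (exp (-(1 / y))))
    (hF0 : ∀ y : ℝ, y ≤ 0 → μ {ω | F ω ≤ y} = 0)
    (Y : Ω → ℝ) (hY : ∀ ω, Y ω = max (a * X ω) ((1 - a) * F ω)) :
    μ {ω | Y ω = a * X ω}
        = ∫⁻ ω, ENNReal.ofReal (exp (-((1 - a) / (a * X ω)))) ∂μ ∧
    0 < μ {ω | Y ω = a * X ω} ∧
    μ {ω | X ω = a * Y ω} = 0 ∧
    Measure.map (fun ω => (X ω, Y ω)) μ ≠ Measure.map (fun ω => (Y ω, X ω)) μ :=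
  stmt10_general μ a ha ha1 X F hmX hmF hindep hX0 hF hF0 Y hY
end

section
/- Let μ be a σ-finite measure on (0,∞)^ℤ \ {0} (product σ-algebra) such that: (i) μ is (-1)-homogeneous (μ(uA) = u^{-1}μ(A) for u > 0); (ii) μ({f : f(0) ≥ 1}) = 1; (iii) μ is shift-invariant; (iv) μ is supported by the cone C_inv(f_0) = {u f_0(·+s) : u ≥ 0, s ∈ ℤ} for a fixed nonzero f_0 ∈ [0,∞)^ℤ with ∑_s f_0(s) < ∞. Then μ is uniquely determined by f_0; in particular, any two measures satisfying (i)-(iv) are equal. -/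
/-!
Fix `t₀` with `f₀ t₀ ≠ 0`. Away from the zero function, `C_inv(f₀)` is the union of the open rays
`R_s = {u f₀(· + s) : u > 0}`, and these are pairwise disjoint: a point of `R_s ∩ R_{s'}` with
`s ≠ s'` makes `f₀` geometric along `s' - s`, which summability forbids. The coordinate
`u = g(t₀ - s) / f₀ t₀` identifies `R_s` with `(0, ∞)`, and homogeneity and shift-invariance give
`μ{g ∈ R_s : u ≥ a} = m / a` with `m` independent of `s`. Since `{f(0) ≥ 1} ∩ R_s` is such a set
with `a = 1 / f₀(s)`, the normalisation reads `(∑ₛ f₀(s)⁺) m = 1`. So every `μ|R_s`, hence `μ`,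
is determined by `f₀`.
-/

open MeasureTheory

/-- The smallest shift-invariant cone containing `f₀`:
`C_inv(f₀) = {u f₀(·+s) : u ≥ 0, s ∈ ℤ}`. -/
def Cinv (f₀ : ℤ → ℝ) : Set (ℤ → ℝ) :=
  {g | ∃ u : ℝ, 0 ≤ u ∧ ∃ s : ℤ, g = fun t => u * f₀ (t + s)}

open Set Filter

theorem Summable.eq_zero_of_add_eq_mul_of_one_le {f : ℤ → ℝ} (hf : Summable f) {d : ℤ}
    (hd : d ≠ 0) {c : ℝ} (hc : 1 ≤ c) (h : ∀ t, f (t + d) = c * f t) (t : ℤ) : f t = 0 := by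
  have hpow : ∀ n : ℕ, f (t + n * d) = c ^ n * f t := by
    intro n
    induction n with
    | zero => simp
    | succ n ih => rw [Nat.cast_succ, add_one_mul, ← add_assoc, h, ih, pow_succ', mul_assoc]
  have hinj : Function.Injective fun n : ℕ => t + n * d := fun n m hnm => by
    simpa [hd] using hnm
  have hlim : Tendsto (fun n : ℕ => |f (t + n * d)|) atTop (nhds 0) := by
    have := (hf.tendsto_cofinite_zero.comp hinj.tendsto_cofinite).abs
    rwa [Nat.cofinite_eq_atTop, abs_zero] at this
  have hge : ∀ n : ℕ, |f t| ≤ |f (t + n * d)| := fun n => by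
    rw [hpow, abs_mul, abs_of_nonneg (pow_nonneg (zero_le_one.trans hc) n)]
    exact le_mul_of_one_le_left (abs_nonneg _) (one_le_pow₀ hc)
  exact abs_nonpos_iff.1 (ge_of_tendsto' hlim hge)

theorem Summable.eq_zero_of_add_eq_mul {f : ℤ → ℝ} (hf : Summable f) {d : ℤ} (hd : d ≠ 0)
    {c : ℝ} (hc : 0 < c) (h : ∀ t, f (t + d) = c * f t) : f = 0 := by
  funext t
  rcases le_or_gt 1 c with hc1 | hc1
  · exact hf.eq_zero_of_add_eq_mul_of_one_le hd hc1 h t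
  · refine hf.eq_zero_of_add_eq_mul_of_one_le (neg_ne_zero.2 hd)
      ((one_le_inv₀ hc).2 hc1.le) (fun t => ?_) t
    have := h (t + -d)
    rw [neg_add_cancel_right] at this
    rw [this, inv_mul_cancel_left₀ hc.ne']

def IsNegOneHomogeneous (μ : Measure (ℤ → ℝ)) : Prop :=
  ∀ u : ℝ, 0 < u → ∀ A : Set (ℤ → ℝ), MeasurableSet A →
    μ ((fun f => u • f) '' A) = ENNReal.ofReal u⁻¹ * μ A

def IsShiftInvariant (μ : Measure (ℤ → ℝ)) : Prop :=
  ∀ s : ℤ, Measure.map (fun f : ℤ → ℝ => fun t => f (t + s)) μ = μ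

structure IsTailMeasureOn (f₀ : ℤ → ℝ) (μ : Measure (ℤ → ℝ)) : Prop where
  measure_zero : μ {fun _ => (0 : ℝ)} = 0
  homogeneous : IsNegOneHomogeneous μ
  normalized : μ {f | 1 ≤ f 0} = 1
  shiftInvariant : IsShiftInvariant μ
  measure_compl_cinv : μ (Cinv f₀)ᶜ = 0

namespace Cinv

noncomputable def rayCoord (f₀ : ℤ → ℝ) (t₀ s : ℤ) (g : ℤ → ℝ) : ℝ := g (t₀ - s) / f₀ t₀

def ray (f₀ : ℤ → ℝ) (t₀ s : ℤ) : Set (ℤ → ℝ) :=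
  {g | 0 < rayCoord f₀ t₀ s g ∧ ∀ t, g t = rayCoord f₀ t₀ s g * f₀ (t + s)}

def rayIci (f₀ : ℤ → ℝ) (t₀ s : ℤ) (a : ℝ) : Set (ℤ → ℝ) :=
  ray f₀ t₀ s ∩ rayCoord f₀ t₀ s ⁻¹' Ici a

variable {f₀ : ℤ → ℝ} {t₀ : ℤ}

@[fun_prop]
theorem measurable_rayCoord (s : ℤ) : Measurable (rayCoord f₀ t₀ s) :=
  (measurable_pi_apply _).div_const _

theorem measurableSet_ray (s : ℤ) : MeasurableSet (ray f₀ t₀ s) := by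
  unfold ray rayCoord
  measurability

theorem measurableSet_rayIci (s : ℤ) (a : ℝ) : MeasurableSet (rayIci f₀ t₀ s a) :=
  (measurableSet_ray s).inter (measurable_rayCoord s measurableSet_Ici)

theorem rayCoord_mul_shift (h₀ : f₀ t₀ ≠ 0) (s : ℤ) (u : ℝ) :
    rayCoord f₀ t₀ s (fun t => u * f₀ (t + s)) = u := by
  simp [rayCoord, mul_div_assoc, div_self h₀]

theorem mul_shift_mem_ray (h₀ : f₀ t₀ ≠ 0) (s : ℤ) {u : ℝ} (hu : 0 < u) :
    (fun t => u * f₀ (t + s)) ∈ ray f₀ t₀ s := by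
  simpa [ray, rayCoord_mul_shift h₀] using hu

theorem subset_insert_iUnion_ray (h₀ : f₀ t₀ ≠ 0) :
    Cinv f₀ ⊆ insert (fun _ => 0) (⋃ s, ray f₀ t₀ s) := by
  rintro _ ⟨u, hu, s, rfl⟩
  rcases hu.eq_or_lt with rfl | hu
  · left
    simp
  · exact Or.inr (mem_iUnion.2 ⟨s, mul_shift_mem_ray h₀ s hu⟩)

theorem pairwise_disjoint_ray (hsum : Summable f₀) (h₀ : f₀ t₀ ≠ 0) :
    Pairwise (Function.onFun Disjoint (ray f₀ t₀)) := by
  intro s s' hss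
  refine disjoint_left.2 fun g hg hg' => h₀ ?_
  have hrel : ∀ t, f₀ (t + (s' - s)) = rayCoord f₀ t₀ s g / rayCoord f₀ t₀ s' g * f₀ t := by
    intro t
    have h := hg.2 (t - s)
    rw [hg'.2 (t - s), sub_add_cancel, show t - s + s' = t + (s' - s) by ring] at h
    rw [div_mul_eq_mul_div, eq_div_iff hg'.1.ne', mul_comm, h]
  rw [hsum.eq_zero_of_add_eq_mul (sub_ne_zero.2 hss.symm) (div_pos hg.1 hg'.1) hrel]
  rfl

theorem rayCoord_smul (s : ℤ) (a : ℝ) (g : ℤ → ℝ) :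
    rayCoord f₀ t₀ s (a • g) = a * rayCoord f₀ t₀ s g := by
  simp [rayCoord, mul_div_assoc]

theorem smul_mem_ray {s : ℤ} {a : ℝ} (ha : 0 < a) {g : ℤ → ℝ} (hg : g ∈ ray f₀ t₀ s) :
    a • g ∈ ray f₀ t₀ s := by
  refine ⟨?_, fun t => ?_⟩ <;> rw [rayCoord_smul]
  · exact mul_pos ha hg.1
  · rw [Pi.smul_apply, hg.2 t, smul_eq_mul, mul_assoc]

theorem rayIci_eq_smul_image (s : ℤ) {a : ℝ} (ha : 0 < a) :
    rayIci f₀ t₀ s a = (fun g => a • g) '' rayIci f₀ t₀ s 1 := by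
  ext g
  rw [image_smul, mem_smul_set_iff_inv_smul_mem₀ ha.ne']
  simp only [rayIci, mem_inter_iff, mem_preimage, mem_Ici, rayCoord_smul, le_inv_mul_iff₀ ha,
    mul_one]
  refine ⟨fun ⟨hg, hag⟩ => ⟨smul_mem_ray (inv_pos.2 ha) hg, hag⟩, fun ⟨hg, hag⟩ => ⟨?_, hag⟩⟩
  simpa [smul_inv_smul₀ ha.ne'] using smul_mem_ray ha hg

theorem preimage_shift_rayIci (s : ℤ) (a : ℝ) :
    (fun f : ℤ → ℝ => fun t => f (t + s)) ⁻¹' rayIci f₀ t₀ s a = rayIci f₀ t₀ 0 a := by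
  ext g
  simp only [rayIci, ray, rayCoord, mem_inter_iff, mem_preimage, mem_ofPred_eq, mem_Ici,
    sub_add_cancel, sub_zero, add_zero]
  refine and_congr_left fun _ => and_congr_right fun _ => ⟨fun h t => ?_, fun h t => h (t + s)⟩
  simpa using h (t - s)

theorem preimage_log_rayCoord_Ico_inter_ray (s : ℤ) (a b : ℝ) :
    (fun g => Real.log (rayCoord f₀ t₀ s g)) ⁻¹' Ico a b ∩ ray f₀ t₀ s
      = rayIci f₀ t₀ s (Real.exp a) \ rayIci f₀ t₀ s (Real.exp b) := by
  ext g
  simp only [rayIci, mem_inter_iff, mem_preimage, mem_Ico, Set.mem_sdiff, mem_Ici, not_and, not_le]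
  constructor
  · rintro ⟨⟨hag, hgb⟩, hg⟩
    exact ⟨⟨hg, (Real.le_log_iff_exp_le hg.1).1 hag⟩, fun _ => (Real.log_lt_iff_lt_exp hg.1).1 hgb⟩
  · rintro ⟨⟨hg, hag⟩, hgb⟩
    exact ⟨⟨(Real.le_log_iff_exp_le hg.1).2 hag, (Real.log_lt_iff_lt_exp hg.1).2 (hgb hg)⟩, hg⟩

variable {μ ν : Measure (ℤ → ℝ)}

theorem sum_restrict_ray (hsum : Summable f₀) (h₀ : f₀ t₀ ≠ 0)
    (hzero : μ {fun _ => (0 : ℝ)} = 0) (hsupp : μ (Cinv f₀)ᶜ = 0) :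
    Measure.sum (fun s => μ.restrict (ray f₀ t₀ s)) = μ := by
  rw [← Measure.restrict_iUnion (pairwise_disjoint_ray hsum h₀) measurableSet_ray]
  refine Measure.restrict_eq_self_of_ae_mem (ae_iff.2 (measure_mono_null ?_
    (measure_union_null hsupp hzero)))
  intro g hg
  by_contra h
  simp only [mem_union, mem_compl_iff, not_or, not_not] at h
  rcases subset_insert_iUnion_ray h₀ h.1 with h' | h'
  exacts [h.2 h', hg h']

theorem restrict_ray_eq_map_map_log (s : ℤ) :
    μ.restrict (ray f₀ t₀ s) =
      ((μ.restrict (ray f₀ t₀ s)).map fun g => Real.log (rayCoord f₀ t₀ s g)).map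
        fun x t => Real.exp x * f₀ (t + s) := by
  rw [Measure.map_map (by fun_prop) (by fun_prop)]
  conv_lhs => rw [← Measure.map_id (μ := μ.restrict (ray f₀ t₀ s))]
  refine Measure.map_congr ((ae_restrict_mem (measurableSet_ray s)).mono fun g hg => ?_)
  funext t
  simp only [Function.comp_apply, id_eq, Real.exp_log hg.1]
  exact hg.2 t

theorem map_log_rayCoord_Ico (s : ℤ) {a b : ℝ} (hab : a ≤ b)
    (hfin : μ (rayIci f₀ t₀ s (Real.exp b)) ≠ ⊤) :
    ((μ.restrict (ray f₀ t₀ s)).map fun g => Real.log (rayCoord f₀ t₀ s g)) (Ico a b)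
      = μ (rayIci f₀ t₀ s (Real.exp a)) - μ (rayIci f₀ t₀ s (Real.exp b)) := by
  have hmono : rayIci f₀ t₀ s (Real.exp b) ⊆ rayIci f₀ t₀ s (Real.exp a) :=
    fun g hg => ⟨hg.1, (Real.exp_le_exp.2 hab).trans hg.2⟩
  rw [Measure.map_apply (by fun_prop) measurableSet_Ico,
    Measure.restrict_apply ((by fun_prop : Measurable _) measurableSet_Ico),
    preimage_log_rayCoord_Ico_inter_ray,
    measure_sdiff hmono (measurableSet_rayIci s _).nullMeasurableSet hfin]

-- In the coordinate `log u` bounded intervals have finite mass (unlike `(0, b)` in `u`),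
-- so `Measure.ext_of_Ico'` applies.
theorem restrict_ray_eq_of_measure_rayIci_eq (s : ℤ)
    (hfin : ∀ a, 0 < a → μ (rayIci f₀ t₀ s a) ≠ ⊤)
    (h : ∀ a, 0 < a → μ (rayIci f₀ t₀ s a) = ν (rayIci f₀ t₀ s a)) :
    μ.restrict (ray f₀ t₀ s) = ν.restrict (ray f₀ t₀ s) := by
  have hνfin a (ha : 0 < a) : ν (rayIci f₀ t₀ s a) ≠ ⊤ := h a ha ▸ hfin a ha
  rw [restrict_ray_eq_map_map_log s, restrict_ray_eq_map_map_log (μ := ν) s]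
  congr 1
  refine Measure.ext_of_Ico' _ _ (fun a b hab => ?_) (fun a b hab => ?_)
  · rw [map_log_rayCoord_Ico s hab.le (hfin _ (Real.exp_pos b))]
    exact ne_top_of_le_ne_top (hfin _ (Real.exp_pos a)) tsub_le_self
  · rw [map_log_rayCoord_Ico s hab.le (hfin _ (Real.exp_pos b)),
      map_log_rayCoord_Ico s hab.le (hνfin _ (Real.exp_pos b)),
      h _ (Real.exp_pos a), h _ (Real.exp_pos b)]

theorem measure_rayIci_eq_inv_mul (hμ : IsNegOneHomogeneous μ) (s : ℤ) {a : ℝ} (ha : 0 < a) :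
    μ (rayIci f₀ t₀ s a) = ENNReal.ofReal a⁻¹ * μ (rayIci f₀ t₀ s 1) := by
  rw [rayIci_eq_smul_image s ha, hμ a ha _ (measurableSet_rayIci s 1)]

theorem measure_rayIci_eq_measure_rayIci_zero (hμ : IsShiftInvariant μ) (s : ℤ) (a : ℝ) :
    μ (rayIci f₀ t₀ s a) = μ (rayIci f₀ t₀ 0 a) := by
  conv_lhs => rw [← hμ s]
  rw [Measure.map_apply (by fun_prop) (measurableSet_rayIci s a), preimage_shift_rayIci]

theorem measure_one_le_apply_zero_inter_ray (hhom : IsNegOneHomogeneous μ)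
    (hshift : IsShiftInvariant μ) (s : ℤ) :
    μ ({f | 1 ≤ f 0} ∩ ray f₀ t₀ s) = ENNReal.ofReal (f₀ s) * μ (rayIci f₀ t₀ 0 1) := by
  have happly {g : ℤ → ℝ} (hg : g ∈ ray f₀ t₀ s) : g 0 = rayCoord f₀ t₀ s g * f₀ s := by
    rw [hg.2 0, zero_add]
  rcases le_or_gt (f₀ s) 0 with hs | hs
  · have hempty : {f : ℤ → ℝ | 1 ≤ f 0} ∩ ray f₀ t₀ s = ∅ :=
      eq_empty_of_forall_notMem fun g ⟨h1, hg⟩ => by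
        rw [mem_ofPred_eq, happly hg] at h1
        nlinarith [hg.1]
    rw [hempty, ENNReal.ofReal_of_nonpos hs, measure_empty, zero_mul]
  · have hset : {f : ℤ → ℝ | 1 ≤ f 0} ∩ ray f₀ t₀ s = rayIci f₀ t₀ s (f₀ s)⁻¹ := by
      ext g
      simp only [rayIci, mem_inter_iff, mem_ofPred_eq, mem_preimage, mem_Ici,
        inv_le_iff_one_le_mul₀ hs]
      exact ⟨fun ⟨h1, hg⟩ => ⟨hg, happly hg ▸ h1⟩, fun ⟨hg, h1⟩ => ⟨happly hg ▸ h1, hg⟩⟩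
    rw [hset, measure_rayIci_eq_inv_mul hhom s (inv_pos.2 hs), inv_inv,
      measure_rayIci_eq_measure_rayIci_zero hshift]

end Cinv

namespace IsTailMeasureOn

open Cinv

variable {f₀ : ℤ → ℝ} {t₀ : ℤ} {μ : Measure (ℤ → ℝ)}

theorem tsum_mul_measure_rayIci (hμ : IsTailMeasureOn f₀ μ) (hsum : Summable f₀)
    (h₀ : f₀ t₀ ≠ 0) : (∑' s, ENNReal.ofReal (f₀ s)) * μ (rayIci f₀ t₀ 0 1) = 1 := by
  have hmeas : MeasurableSet {f : ℤ → ℝ | 1 ≤ f 0} :=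
    measurableSet_le measurable_const (measurable_pi_apply 0)
  calc (∑' s, ENNReal.ofReal (f₀ s)) * μ (rayIci f₀ t₀ 0 1)
      = ∑' s, μ.restrict (ray f₀ t₀ s) {f | 1 ≤ f 0} := by
        rw [← ENNReal.tsum_mul_right]
        refine tsum_congr fun s => ?_
        rw [Measure.restrict_apply hmeas,
          measure_one_le_apply_zero_inter_ray hμ.homogeneous hμ.shiftInvariant]
    _ = μ {f | 1 ≤ f 0} := by
        rw [← Measure.sum_apply _ hmeas,
          sum_restrict_ray hsum h₀ hμ.measure_zero hμ.measure_compl_cinv]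
    _ = 1 := hμ.normalized

theorem measure_rayIci (hμ : IsTailMeasureOn f₀ μ) (hsum : Summable f₀) (h₀ : f₀ t₀ ≠ 0)
    (s : ℤ) {a : ℝ} (ha : 0 < a) :
    μ (rayIci f₀ t₀ s a) = ENNReal.ofReal a⁻¹ * (∑' s, ENNReal.ofReal (f₀ s))⁻¹ := by
  rw [measure_rayIci_eq_inv_mul hμ.homogeneous s ha,
    measure_rayIci_eq_measure_rayIci_zero hμ.shiftInvariant,
    ENNReal.eq_inv_of_mul_eq_one_left ((mul_comm _ _).trans (hμ.tsum_mul_measure_rayIci hsum h₀))]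

theorem measure_rayIci_ne_top (hμ : IsTailMeasureOn f₀ μ) (hsum : Summable f₀)
    (h₀ : f₀ t₀ ≠ 0) (s : ℤ) {a : ℝ} (ha : 0 < a) : μ (rayIci f₀ t₀ s a) ≠ ⊤ := by
  rw [hμ.measure_rayIci hsum h₀ s ha]
  exact ENNReal.mul_ne_top ENNReal.ofReal_ne_top
    (ENNReal.inv_ne_top.2 (left_ne_zero_of_mul_eq_one (hμ.tsum_mul_measure_rayIci hsum h₀)))

end IsTailMeasureOn

theorem stmt12_general (f₀ : ℤ → ℝ) (hf₀ne : f₀ ≠ 0)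
    (hf₀sum : Summable f₀)
    (μ ν : Measure (ℤ → ℝ))
    (hμ0 : μ {fun _ => (0 : ℝ)} = 0) (hν0 : ν {fun _ => (0 : ℝ)} = 0)
    (hμhom : ∀ u : ℝ, 0 < u → ∀ A : Set (ℤ → ℝ), MeasurableSet A →
      μ ((fun f => u • f) '' A) = ENNReal.ofReal u⁻¹ * μ A)
    (hνhom : ∀ u : ℝ, 0 < u → ∀ A : Set (ℤ → ℝ), MeasurableSet A →
      ν ((fun f => u • f) '' A) = ENNReal.ofReal u⁻¹ * ν A)
    (hμnorm : μ {f | 1 ≤ f 0} = 1) (hνnorm : ν {f | 1 ≤ f 0} = 1)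
    (hμshift : ∀ s : ℤ, Measure.map (fun f : ℤ → ℝ => fun t => f (t + s)) μ = μ)
    (hνshift : ∀ s : ℤ, Measure.map (fun f : ℤ → ℝ => fun t => f (t + s)) ν = ν)
    (hμsupp : μ (Cinv f₀)ᶜ = 0) (hνsupp : ν (Cinv f₀)ᶜ = 0) :
    μ = ν := by
  obtain ⟨t₀, h₀⟩ := Function.ne_iff.1 hf₀ne
  have hμ : IsTailMeasureOn f₀ μ := ⟨hμ0, hμhom, hμnorm, hμshift, hμsupp⟩
  have hν : IsTailMeasureOn f₀ ν := ⟨hν0, hνhom, hνnorm, hνshift, hνsupp⟩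
  rw [← Cinv.sum_restrict_ray hf₀sum h₀ hμ0 hμsupp, ← Cinv.sum_restrict_ray hf₀sum h₀ hν0 hνsupp]
  refine congrArg Measure.sum (funext fun s => ?_)
  refine Cinv.restrict_ray_eq_of_measure_rayIci_eq s
    (fun a ha => hμ.measure_rayIci_ne_top hf₀sum h₀ s ha) fun a ha => ?_
  rw [hμ.measure_rayIci hf₀sum h₀ s ha, hν.measure_rayIci hf₀sum h₀ s ha]

/-- A σ-finite measure `μ` on `(0,∞)^ℤ \ {0}` (here: on `ℤ → ℝ`, giving no mass to the
zero function) which is (i) `(-1)`-homogeneous, (ii) normalized by `μ{f : f(0) ≥ 1} = 1`,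
(iii) shift-invariant, and (iv) supported by the cone `C_inv(f₀)` for a fixed nonzero
nonnegative summable `f₀`, is uniquely determined: any two such measures are equal. -/
theorem stmt12 (f₀ : ℤ → ℝ) (hf₀pos : ∀ t, 0 ≤ f₀ t) (hf₀ne : f₀ ≠ 0)
    (hf₀sum : Summable f₀)
    (μ ν : Measure (ℤ → ℝ)) [SigmaFinite μ] [SigmaFinite ν]
    (hμ0 : μ {fun _ => (0 : ℝ)} = 0) (hν0 : ν {fun _ => (0 : ℝ)} = 0)
    (hμhom : ∀ u : ℝ, 0 < u → ∀ A : Set (ℤ → ℝ), MeasurableSet A →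
      μ ((fun f => u • f) '' A) = ENNReal.ofReal u⁻¹ * μ A)
    (hνhom : ∀ u : ℝ, 0 < u → ∀ A : Set (ℤ → ℝ), MeasurableSet A →
      ν ((fun f => u • f) '' A) = ENNReal.ofReal u⁻¹ * ν A)
    (hμnorm : μ {f | 1 ≤ f 0} = 1) (hνnorm : ν {f | 1 ≤ f 0} = 1)
    (hμshift : ∀ s : ℤ, Measure.map (fun f : ℤ → ℝ => fun t => f (t + s)) μ = μ)
    (hνshift : ∀ s : ℤ, Measure.map (fun f : ℤ → ℝ => fun t => f (t + s)) ν = ν)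
    (hμsupp : μ (Cinv f₀)ᶜ = 0) (hνsupp : ν (Cinv f₀)ᶜ = 0) :
    μ = ν :=
  stmt12_general f₀ hf₀ne hf₀sum μ ν hμ0 hν0 hμhom hνhom hμnorm hνnorm hμshift hνshift hμsupp hνsupp
end
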